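/- arXiv:1505.04985 — 2 statements merged into one kernel-verified Lean document; each statement's English description precedes it below -/
import Mathlib

section
/- The axiomatization A1–4 + IF1 + IF2 is ground-complete for BCCSP modulo the impossible futures preorder: for all closed BCCSP terms p, q, if p ≲_IF q then A1–4+IF1+IF2 ⊢ p ≼ q. -/
/-- BCCSP terms over concrete actions `A` and variables `V` (no τ prefix). -/
inductive TmP (A V : Type) : Type
  | nil : TmP A V
  | var : V → TmP A V
  | plus : TmP A V → TmP A V → TmP A V
  | pre : A → TmP A V → TmP A V

namespace TmP

variable {A V : Type}

/-- The operational semantics of BCCSP. -/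
inductive Step : TmP A V → A → TmP A V → Prop
  | pre (a : A) (t : TmP A V) : Step (.pre a t) a t
  | plusL {t : TmP A V} {a : A} {t' : TmP A V} (u : TmP A V) :
      Step t a t' → Step (.plus t u) a t'
  | plusR (t : TmP A V) {u : TmP A V} {a : A} {u' : TmP A V} :
      Step u a u' → Step (.plus t u) a u'

/-- Traces leading to a state. -/
inductive TraceTo : TmP A V → List A → TmP A V → Prop
  | refl (t : TmP A V) : TraceTo t [] t
  | act {t : TmP A V} {a : A} {t' : TmP A V} {w : List A} {u : TmP A V} :
      Step t a t' → TraceTo t' w u → TraceTo t (a :: w) u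

/-- The set of traces of a term. -/
def T (t : TmP A V) : Set (List A) := {w | ∃ t', TraceTo t w t'}

/-- `(w, B)` is an impossible future of `t`. -/
def ImpFut (t : TmP A V) (w : List A) (B : Set (List A)) : Prop :=
  ∃ t', TraceTo t w t' ∧ ∀ s ∈ T t', s ∉ B

/-- The impossible futures preorder. -/
def IFle (p q : TmP A V) : Prop := ∀ w B, ImpFut p w B → ImpFut q w B

/-- Impossible futures equivalence. -/
def IFeq (p q : TmP A V) : Prop := IFle p q ∧ IFle q p

/-- The variables occurring in a term. -/
def vars : TmP A V → Set V
  | nil => ∅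
  | var x => {x}
  | plus t u => vars t ∪ vars u
  | pre _ t => vars t

/-- A term is closed if it contains no variables. -/
def Closed (t : TmP A V) : Prop := vars t = ∅

/-- Substitution. -/
def subst (σ : V → TmP A V) : TmP A V → TmP A V
  | nil => nil
  | var x => σ x
  | plus t u => plus (subst σ t) (subst σ u)
  | pre a t => pre a (subst σ t)

/-- `n`-fold prefixing with the action `a`. -/
def npre (a : A) : ℕ → TmP A V → TmP A V
  | 0, t => t
  | n + 1, t => pre a (npre a n t)

/-- Finite sums of terms. -/
def listSum : List (TmP A V) → TmP A V
  | [] => nil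
  | t :: l => plus t (listSum l)

/-- The axioms A1-4 + IF1 + IF2 (as instantiation-closed schemas; equational
axioms are listed in both directions for inequational derivability). -/
inductive AXIF : TmP A V → TmP A V → Prop
  | A1 (t u : TmP A V) : AXIF (.plus t u) (.plus u t)
  | A2 (t u v : TmP A V) : AXIF (.plus (.plus t u) v) (.plus t (.plus u v))
  | A2r (t u v : TmP A V) : AXIF (.plus t (.plus u v)) (.plus (.plus t u) v)
  | A3 (t : TmP A V) : AXIF (.plus t t) t
  | A3r (t : TmP A V) : AXIF t (.plus t t)
  | A4 (t : TmP A V) : AXIF (.plus t .nil) t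
  | A4r (t : TmP A V) : AXIF t (.plus t .nil)
  | IF1 (a : A) (t u : TmP A V) :
      AXIF (.pre a (.plus t u)) (.plus (.pre a t) (.pre a u))
  | IF2 (a : A) (t u v : TmP A V) :
      AXIF (.plus (.pre a t) (.pre a (.plus u v)))
           (.plus (.pre a (.plus t u)) (.plus (.pre a t) (.pre a (.plus u v))))
  | IF2r (a : A) (t u v : TmP A V) :
      AXIF (.plus (.pre a (.plus t u)) (.plus (.pre a t) (.pre a (.plus u v))))
           (.plus (.pre a t) (.pre a (.plus u v)))

/-- Equational derivability from an axiomatization `E`. -/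
inductive Deriv (E : TmP A V → TmP A V → Prop) : TmP A V → TmP A V → Prop
  | ax {t u : TmP A V} : E t u → Deriv E t u
  | inst {t u : TmP A V} (σ : V → TmP A V) : E t u → Deriv E (subst σ t) (subst σ u)
  | refl (t : TmP A V) : Deriv E t t
  | symm {t u : TmP A V} : Deriv E t u → Deriv E u t
  | trans {t u v : TmP A V} : Deriv E t u → Deriv E u v → Deriv E t v
  | pre (a : A) {t u : TmP A V} : Deriv E t u → Deriv E (.pre a t) (.pre a u)
  | plus {t u t' u' : TmP A V} :
      Deriv E t t' → Deriv E u u' → Deriv E (.plus t u) (.plus t' u')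

/-- Inequational derivability from an axiomatization `E` (no symmetry). -/
inductive IDeriv (E : TmP A V → TmP A V → Prop) : TmP A V → TmP A V → Prop
  | ax {t u : TmP A V} : E t u → IDeriv E t u
  | inst {t u : TmP A V} (σ : V → TmP A V) : E t u → IDeriv E (subst σ t) (subst σ u)
  | refl (t : TmP A V) : IDeriv E t t
  | trans {t u v : TmP A V} : IDeriv E t u → IDeriv E u v → IDeriv E t v
  | pre (a : A) {t u : TmP A V} : IDeriv E t u → IDeriv E (.pre a t) (.pre a u)
  | plus {t u t' u' : TmP A V} :
      IDeriv E t t' → IDeriv E u u' → IDeriv E (.plus t u) (.plus t' u')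

end TmP

namespace TmP

variable {A V : Type}

abbrev Dv : TmP A V → TmP A V → Prop := IDeriv AXIF

/-- Provable equation: derivable inequations in both directions. -/
def Eqv (t u : TmP A V) : Prop := Dv t u ∧ Dv u t

theorem Eqv.refl (t : TmP A V) : Eqv t t := ⟨.refl t, .refl t⟩
theorem Eqv.symm {t u : TmP A V} (h : Eqv t u) : Eqv u t := ⟨h.2, h.1⟩
theorem Eqv.trans {t u v : TmP A V} (h1 : Eqv t u) (h2 : Eqv u v) : Eqv t v :=
  ⟨h1.1.trans h2.1, h2.2.trans h1.2⟩
theorem eqv_plus {t u t' u' : TmP A V} (h1 : Eqv t t') (h2 : Eqv u u') :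
    Eqv (plus t u) (plus t' u') := ⟨.plus h1.1 h2.1, .plus h1.2 h2.2⟩
theorem eqv_pre (a : A) {t u : TmP A V} (h : Eqv t u) :
    Eqv (pre a t) (pre a u) := ⟨.pre a h.1, .pre a h.2⟩

theorem pcomm (t u : TmP A V) : Eqv (plus t u) (plus u t) :=
  ⟨.ax (.A1 t u), .ax (.A1 u t)⟩
theorem passoc (t u v : TmP A V) : Eqv (plus (plus t u) v) (plus t (plus u v)) :=
  ⟨.ax (.A2 t u v), .ax (.A2r t u v)⟩
theorem pidem (t : TmP A V) : Eqv (plus t t) t := ⟨.ax (.A3 t), .ax (.A3r t)⟩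
theorem pzero (t : TmP A V) : Eqv (plus t nil) t := ⟨.ax (.A4 t), .ax (.A4r t)⟩
theorem if2eq (a : A) (x y z : TmP A V) :
    Eqv (plus (pre a x) (pre a (plus y z)))
        (plus (pre a (plus x y)) (plus (pre a x) (pre a (plus y z)))) :=
  ⟨.ax (.IF2 a x y z), .ax (.IF2r a x y z)⟩
theorem if1le (a : A) (t u : TmP A V) :
    Dv (pre a (plus t u)) (plus (pre a t) (pre a u)) := .ax (.IF1 a t u)

/-! ### Absorption -/

/-- `u` provably absorbs `v`. -/
def Abs (u v : TmP A V) : Prop := Eqv u (plus u v)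

theorem abs_zero (u : TmP A V) : Abs u nil := (pzero u).symm
theorem abs_self (u : TmP A V) : Abs u u := (pidem u).symm

theorem abs_congr {u v v' : TmP A V} (h : Abs u v) (h2 : Eqv v v') : Abs u v' :=
  h.trans (eqv_plus (Eqv.refl u) h2)

theorem abs_pair {u v w : TmP A V} (h1 : Abs u v) (h2 : Abs u w) : Abs u (plus v w) := by
  have s1 : Eqv u (plus u v) := h1
  have s2 : Eqv (plus u v) (plus (plus u w) v) := eqv_plus h2 (Eqv.refl v)
  have s3 : Eqv (plus (plus u w) v) (plus u (plus w v)) := passoc u w v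
  have s4 : Eqv (plus u (plus w v)) (plus u (plus v w)) :=
    eqv_plus (Eqv.refl u) (pcomm w v)
  exact ((s1.trans s2).trans s3).trans s4

theorem abs_plusL {t w v : TmP A V} (h : Abs t v) : Abs (plus t w) v := by
  have s1 : Eqv (plus t w) (plus (plus t v) w) := eqv_plus h (Eqv.refl w)
  have s2 : Eqv (plus (plus t v) w) (plus t (plus v w)) := passoc t v w
  have s3 : Eqv (plus t (plus v w)) (plus t (plus w v)) :=
    eqv_plus (Eqv.refl t) (pcomm v w)
  have s4 : Eqv (plus t (plus w v)) (plus (plus t w) v) := (passoc t w v).symm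
  exact ((s1.trans s2).trans s3).trans s4

theorem abs_plusR {t w v : TmP A V} (h : Abs w v) : Abs (plus t w) v := by
  have s1 : Eqv (plus t w) (plus w t) := pcomm t w
  have s2 : Abs (plus w t) v := abs_plusL h
  have : Eqv (plus t w) (plus (plus w t) v) := s1.trans s2
  exact this.trans (eqv_plus (pcomm w t) (Eqv.refl v))

theorem abs_step {u : TmP A V} {c : A} {t : TmP A V} (h : Step u c t) :
    Abs u (pre c t) := by
  induction h with
  | pre a t => exact abs_self _
  | plusL w h ih => exact abs_plusL ih
  | plusR t h ih => exact abs_plusR ih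

theorem abs_listSum {u : TmP A V} : ∀ {l : List (TmP A V)},
    (∀ v ∈ l, Abs u v) → Abs u (listSum l)
  | [], _ => abs_zero u
  | v :: l, h =>
      abs_pair (h v (List.mem_cons_self ..))
        (abs_listSum (fun w hw => h w (List.mem_cons_of_mem _ hw)))

theorem abs_if2 {u : TmP A V} {c : A} {x y z : TmP A V}
    (h1 : Abs u (pre c x)) (h2 : Abs u (pre c (plus y z))) :
    Abs u (pre c (plus x y)) := by
  set S := plus (pre c x) (pre c (plus y z)) with hS
  have hAS : Abs u S := abs_pair h1 h2
  have hadd : Eqv S (plus (pre c (plus x y)) S) := if2eq c x y z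
  have s1 : Eqv u (plus u (plus (pre c (plus x y)) S)) :=
    hAS.trans (eqv_plus (Eqv.refl u) hadd)
  have s2 : Eqv (plus u (plus (pre c (plus x y)) S)) (plus u (plus S (pre c (plus x y)))) :=
    eqv_plus (Eqv.refl u) (pcomm _ _)
  have s3 : Eqv (plus u (plus S (pre c (plus x y)))) (plus (plus u S) (pre c (plus x y))) :=
    (passoc u S _).symm
  have s4 : Eqv (plus (plus u S) (pre c (plus x y))) (plus u (pre c (plus x y))) :=
    eqv_plus hAS.symm (Eqv.refl _)
  exact ((s1.trans s2).trans s3).trans s4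

theorem abs_pre_pair {u : TmP A V} {c : A} {s t : TmP A V}
    (h1 : Abs u (pre c s)) (h2 : Abs u (pre c t)) : Abs u (pre c (plus s t)) :=
  abs_if2 h1 (abs_congr h2 (eqv_pre c (pidem t).symm))

end TmP

namespace TmP

variable {A V : Type}

/-! ### Syntax: size and summands -/

def size : TmP A V → ℕ
  | nil => 1
  | var _ => 1
  | plus t u => size t + size u + 1
  | pre _ t => size t + 1

theorem size_pos (t : TmP A V) : 0 < size t := by
  cases t <;> simp [size]

def succs : TmP A V → List (A × TmP A V)
  | nil => []
  | var _ => []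
  | plus t u => succs t ++ succs u
  | pre a t => [(a, t)]

theorem mem_succs_of_step {t : TmP A V} {a : A} {t' : TmP A V} (h : Step t a t') :
    (a, t') ∈ succs t := by
  induction h with
  | pre a t => simp [succs]
  | plusL u h ih => simp [succs]; exact Or.inl ih
  | plusR t h ih => simp [succs]; exact Or.inr ih

theorem step_of_mem_succs : ∀ {t : TmP A V} {a : A} {t' : TmP A V},
    (a, t') ∈ succs t → Step t a t' := by
  intro t
  induction t with
  | nil => intro a t' h; simp [succs] at h
  | var x => intro a t' h; simp [succs] at h
  | plus t u iht ihu =>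
      intro a t' h
      rcases List.mem_append.mp h with h | h
      · exact Step.plusL _ (iht h)
      · exact Step.plusR _ (ihu h)
  | pre b t ih =>
      intro a t' h
      simp [succs] at h
      obtain ⟨rfl, rfl⟩ := h
      exact Step.pre _ _

theorem size_of_mem_succs {u : TmP A V} {pr : A × TmP A V} (h : pr ∈ succs u) :
    size pr.2 < size u := by
  induction u with
  | nil => simp [succs] at h
  | var x => simp [succs] at h
  | plus t u iht ihu =>
      rcases List.mem_append.mp (by simpa [succs] using h) with h | h
      · have := iht h; simp [size]; omega
      · have := ihu h; simp [size]; omega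
  | pre a t =>
      have h' : pr = (a, t) := by simpa [succs] using h
      subst h'
      simp [size]

theorem step_listSum_iff {l : List (TmP A V)} {a : A} {s : TmP A V} :
    Step (listSum l) a s ↔ ∃ t ∈ l, Step t a s := by
  induction l with
  | nil =>
      constructor
      · intro h; exact absurd h (by intro h; cases h)
      · rintro ⟨t, ht, -⟩; simp at ht
  | cons t l ih =>
      constructor
      · intro h
        cases h with
        | plusL _ h => exact ⟨t, by simp, h⟩
        | plusR _ h =>
            obtain ⟨t', ht', h'⟩ := ih.mp h
            exact ⟨t', by simp [ht'], h'⟩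
      · rintro ⟨t', ht', h'⟩
        rcases List.mem_cons.mp ht' with rfl | ht'
        · exact Step.plusL _ h'
        · exact Step.plusR _ (ih.mpr ⟨t', ht', h'⟩)

theorem step_listSum_of_mem {l : List (TmP A V)} {a : A} {s : TmP A V}
    (h : pre a s ∈ l) : Step (listSum l) a s :=
  step_listSum_iff.mpr ⟨pre a s, h, Step.pre a s⟩

/-! ### Traces -/

theorem traceTo_nil_iff {t u : TmP A V} : TraceTo t [] u ↔ u = t := by
  constructor
  · intro h; cases h; rfl
  · rintro rfl; exact TraceTo.refl _

theorem traceTo_cons_iff {t : TmP A V} {a : A} {w : List A} {u : TmP A V} :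
    TraceTo t (a :: w) u ↔ ∃ t', Step t a t' ∧ TraceTo t' w u := by
  constructor
  · intro h; cases h with | act hs ht => exact ⟨_, hs, ht⟩
  · rintro ⟨t', hs, ht⟩; exact TraceTo.act hs ht

theorem mem_T_iff {t : TmP A V} {w : List A} : w ∈ T t ↔ ∃ t', TraceTo t w t' := Iff.rfl

theorem nil_mem_T (t : TmP A V) : [] ∈ T t := ⟨t, TraceTo.refl t⟩

theorem cons_mem_T {t t' : TmP A V} {a : A} {w : List A}
    (hs : Step t a t') (hw : w ∈ T t') : a :: w ∈ T t := by
  obtain ⟨s, hts⟩ := hw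
  exact ⟨s, TraceTo.act hs hts⟩

theorem mem_T_plus {t u : TmP A V} {w : List A} :
    w ∈ T (plus t u) ↔ w ∈ T t ∨ w ∈ T u := by
  cases w with
  | nil => simp [nil_mem_T]
  | cons a v =>
      constructor
      · rintro ⟨s, hts⟩
        rcases traceTo_cons_iff.mp hts with ⟨t', hs, ht⟩
        cases hs with
        | plusL _ h => exact Or.inl (cons_mem_T h ⟨s, ht⟩)
        | plusR _ h => exact Or.inr (cons_mem_T h ⟨s, ht⟩)
      · rintro (⟨s, hts⟩ | ⟨s, hts⟩)
        · rcases traceTo_cons_iff.mp hts with ⟨t', hs, ht⟩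
          exact ⟨s, TraceTo.act (Step.plusL _ hs) ht⟩
        · rcases traceTo_cons_iff.mp hts with ⟨t', hs, ht⟩
          exact ⟨s, TraceTo.act (Step.plusR _ hs) ht⟩

theorem mem_T_pre {a : A} {t : TmP A V} {w : List A} :
    w ∈ T (pre a t) ↔ w = [] ∨ ∃ v, w = a :: v ∧ v ∈ T t := by
  cases w with
  | nil => simp [nil_mem_T]
  | cons b v =>
      constructor
      · rintro ⟨s, hts⟩
        rcases traceTo_cons_iff.mp hts with ⟨t', hs, ht⟩
        cases hs
        exact Or.inr ⟨v, rfl, ⟨s, ht⟩⟩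
      · rintro (h | ⟨v', hv, hmem⟩)
        · simp at h
        · injection hv with h1 h2
          subst h1; subst h2
          exact cons_mem_T (Step.pre b t) hmem

theorem mem_T_listSum_of_mem {l : List (TmP A V)} {t : TmP A V} {w : List A}
    (ht : t ∈ l) (hw : w ∈ T t) : w ∈ T (listSum l) := by
  cases w with
  | nil => exact nil_mem_T _
  | cons a v =>
      obtain ⟨s, hts⟩ := hw
      rcases traceTo_cons_iff.mp hts with ⟨t', hs, htr⟩
      exact ⟨s, TraceTo.act (step_listSum_iff.mpr ⟨t, ht, hs⟩) htr⟩

theorem mem_T_listSum_elim {l : List (TmP A V)} {w : List A}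
    (h : w ∈ T (listSum l)) : w = [] ∨ ∃ t ∈ l, w ∈ T t := by
  cases w with
  | nil => exact Or.inl rfl
  | cons a v =>
      obtain ⟨s, hts⟩ := h
      rcases traceTo_cons_iff.mp hts with ⟨t', hs, htr⟩
      obtain ⟨t, ht, hstep⟩ := step_listSum_iff.mp hs
      exact Or.inr ⟨t, ht, cons_mem_T hstep ⟨s, htr⟩⟩

/-! ### Merged derivatives -/

open Classical in
noncomputable def derivList (u : TmP A V) (c : A) : List (TmP A V) :=
  (succs u).filterMap (fun pr => if pr.1 = c then some pr.2 else none)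

noncomputable def Dsum (u : TmP A V) (c : A) : TmP A V := listSum (derivList u c)

theorem mem_derivList {u : TmP A V} {c : A} {t : TmP A V} :
    t ∈ derivList u c ↔ Step u c t := by
  constructor
  · intro h
    rcases List.mem_filterMap.mp h with ⟨⟨a, s⟩, hmem, hif⟩
    by_cases hac : a = c
    · subst hac
      rw [if_pos rfl] at hif
      cases hif
      exact step_of_mem_succs hmem
    · rw [if_neg hac] at hif; cases hif
  · intro h
    exact List.mem_filterMap.mpr ⟨(c, t), mem_succs_of_step h, if_pos rfl⟩

theorem step_Dsum_iff {u : TmP A V} {c d : A} {s : TmP A V} :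
    Step (Dsum u c) d s ↔ ∃ x, Step u c x ∧ Step x d s := by
  unfold Dsum
  rw [step_listSum_iff]
  constructor
  · rintro ⟨x, hx, h⟩; exact ⟨x, mem_derivList.mp hx, h⟩
  · rintro ⟨x, hx, h⟩; exact ⟨x, mem_derivList.mpr hx, h⟩

theorem mem_T_Dsum {u : TmP A V} {c : A} {x : TmP A V} {w : List A}
    (hx : Step u c x) (hw : w ∈ T x) : w ∈ T (Dsum u c) :=
  mem_T_listSum_of_mem (mem_derivList.mpr hx) hw

end TmP

namespace TmP

variable {A V : Type}

/-! ### Merging derivatives via IF2 -/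

theorem abs_merge_list {u : TmP A V} {c : A} :
    ∀ {l : List (TmP A V)}, l ≠ [] → (∀ t ∈ l, Abs u (pre c t)) →
      Abs u (pre c (listSum l))
  | [], h, _ => absurd rfl h
  | [t], _, h => by
      have := h t (by simp)
      exact abs_congr this (eqv_pre c (pzero t).symm)
  | t :: t' :: l, _, h => by
      have h1 : Abs u (pre c t) := h t (by simp)
      have h2 : Abs u (pre c (listSum (t' :: l))) :=
        abs_merge_list (by simp) (fun s hs => h s (List.mem_cons_of_mem _ hs))
      exact abs_pre_pair h1 h2

theorem abs_Dsum {u : TmP A V} {c : A} {t0 : TmP A V} (h : Step u c t0) :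
    Abs u (pre c (Dsum u c)) := by
  apply abs_merge_list
  · intro hl
    have : t0 ∈ derivList u c := mem_derivList.mpr h
    rw [hl] at this; simp at this
  · intro t ht
    exact abs_step (mem_derivList.mp ht)

/-! ### Buildable saturations -/

inductive Bld : TmP A V → A → TmP A V → Prop
  | mk {u : TmP A V} {c : A} {t0 : TmP A V} {l : List (A × TmP A V)} :
      Step u c t0 → (∀ pr ∈ l, Bld (Dsum u c) pr.1 pr.2) →
      Bld u c (plus t0 (listSum (l.map fun pr => pre pr.1 pr.2)))

theorem bld_abs {u : TmP A V} {c : A} {R : TmP A V} (h : Bld u c R) :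
    Abs u (pre c R) := by
  induction h with
  | @mk u c t0 l hstep hl ih =>
      have hE : Abs (Dsum u c) (listSum (l.map fun pr => pre pr.1 pr.2)) := by
        apply abs_listSum
        intro v hv
        obtain ⟨pr, hpr, rfl⟩ := List.mem_map.mp hv
        exact ih pr hpr
      have hm : Abs u (pre c (Dsum u c)) := abs_Dsum hstep
      have h2 : Abs u (pre c (plus (Dsum u c) (listSum (l.map fun pr => pre pr.1 pr.2)))) :=
        abs_congr hm (eqv_pre c hE)
      have h3 : Abs u (pre c (plus (listSum (l.map fun pr => pre pr.1 pr.2)) (Dsum u c))) :=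
        abs_congr h2 (eqv_pre c (pcomm _ _))
      exact abs_if2 (abs_step hstep) h3

/-! ### Normal form -/

theorem eqv_listSum_append : ∀ (l1 l2 : List (TmP A V)),
    Eqv (listSum (l1 ++ l2)) (plus (listSum l1) (listSum l2))
  | [], l2 => by
      have : Eqv (plus (listSum ([] : List (TmP A V))) (listSum l2)) (listSum l2) :=
        (pcomm _ _).trans (pzero _)
      simpa using this.symm
  | t :: l1, l2 => by
      have ih := eqv_listSum_append l1 l2
      have s1 : Eqv (listSum ((t :: l1) ++ l2)) (plus t (plus (listSum l1) (listSum l2))) :=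
        eqv_plus (Eqv.refl t) ih
      exact s1.trans (passoc t (listSum l1) (listSum l2)).symm

theorem norm : ∀ u : TmP A Empty,
    Eqv u (listSum ((succs u).map fun pr => pre pr.1 pr.2))
  | nil => Eqv.refl nil
  | var x => x.elim
  | plus t u => by
      have iht := norm t
      have ihu := norm u
      have s1 : Eqv (plus t u) (plus (listSum ((succs t).map fun pr => pre pr.1 pr.2))
          (listSum ((succs u).map fun pr => pre pr.1 pr.2))) := eqv_plus iht ihu
      have s2 := (eqv_listSum_append ((succs t).map fun pr => pre pr.1 pr.2)
          ((succs u).map fun pr => pre pr.1 pr.2)).symm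
      have := s1.trans s2
      simpa [succs] using this
  | pre a t => by
      simpa [succs, listSum] using (pzero (pre a t)).symm

/-! ### List absorption for inequations -/

theorem dv_add_list {t : TmP A V} : ∀ {l : List (TmP A V)},
    (∀ v ∈ l, Dv t (plus t v)) → Dv t (plus t (listSum l))
  | [], _ => (pzero t).2
  | v :: l, h => by
      have ih : Dv t (plus t (listSum l)) :=
        dv_add_list (fun w hw => h w (List.mem_cons_of_mem _ hw))
      have h1 : Dv (plus t (listSum l)) (plus (plus t v) (listSum l)) :=
        IDeriv.plus (h v (by simp)) (IDeriv.refl _)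
      exact (ih.trans h1).trans (passoc t v (listSum l)).1

theorem dv_absorb_list {X : TmP A V} : ∀ {l : List (TmP A V)},
    (∀ v ∈ l, Dv (plus X v) X) → Dv (plus X (listSum l)) X
  | [], _ => (pzero X).1
  | v :: l, h => by
      have s1 : Dv (plus X (plus v (listSum l))) (plus (plus X v) (listSum l)) :=
        (passoc X v (listSum l)).symm.1
      have s2 : Dv (plus (plus X v) (listSum l)) (plus X (listSum l)) :=
        IDeriv.plus (h v (by simp)) (IDeriv.refl _)
      have s3 : Dv (plus X (listSum l)) X :=
        dv_absorb_list (fun w hw => h w (List.mem_cons_of_mem _ hw))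
      exact (s1.trans s2).trans s3

end TmP

namespace TmP

variable {A : Type}

/-! ### The trace-absorption lemma L1 -/

theorem L1 : ∀ (n : ℕ) (u : TmP A Empty), size u ≤ n →
    ∀ t : TmP A Empty, T u ⊆ T t → Dv t (plus t u) := by
  intro n
  induction n with
  | zero => intro u hu; exact absurd hu (by have := size_pos u; omega)
  | succ n ih =>
      intro u hu t hsub
      have hsummand : ∀ pr ∈ succs u, Dv t (plus t (pre pr.1 pr.2)) := by
        rintro ⟨c, r⟩ hpr
        have hstepu : Step u c r := step_of_mem_succs hpr
        have hct : [c] ∈ T t := hsub (cons_mem_T hstepu (nil_mem_T r))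
        obtain ⟨s, hts⟩ := hct
        rcases traceTo_cons_iff.mp hts with ⟨x, hx, -⟩
        have hm : Abs t (pre c (Dsum t c)) := abs_Dsum hx
        have hTr : T r ⊆ T (Dsum t c) := by
          intro w hw
          have hcw : c :: w ∈ T t := hsub (cons_mem_T hstepu hw)
          obtain ⟨s', hts'⟩ := hcw
          rcases traceTo_cons_iff.mp hts' with ⟨x', hx', hw'⟩
          exact mem_T_Dsum hx' ⟨s', hw'⟩
        have hsize : size r ≤ n := by
          have := size_of_mem_succs hpr
          simp at this; omega
        have ihr : Dv (Dsum t c) (plus (Dsum t c) r) := ih r hsize (Dsum t c) hTr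
        have c1 : Dv t (plus t (pre c (Dsum t c))) := hm.1
        have c2 : Dv (plus t (pre c (Dsum t c))) (plus t (pre c (plus (Dsum t c) r))) :=
          IDeriv.plus (IDeriv.refl t) (IDeriv.pre c ihr)
        have c3 : Dv (plus t (pre c (plus (Dsum t c) r)))
            (plus t (plus (pre c (Dsum t c)) (pre c r))) :=
          IDeriv.plus (IDeriv.refl t) (if1le c (Dsum t c) r)
        have c4 : Dv (plus t (plus (pre c (Dsum t c)) (pre c r)))
            (plus (plus t (pre c (Dsum t c))) (pre c r)) := (passoc _ _ _).2
        have c5 : Dv (plus (plus t (pre c (Dsum t c))) (pre c r)) (plus t (pre c r)) :=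
          IDeriv.plus hm.2 (IDeriv.refl _)
        exact (((c1.trans c2).trans c3).trans c4).trans c5
      have hall : ∀ v ∈ (succs u).map (fun pr => pre pr.1 pr.2), Dv t (plus t v) := by
        intro v hv
        obtain ⟨pr, hpr, rfl⟩ := List.mem_map.mp hv
        exact hsummand pr hpr
      have h1 : Dv t (plus t (listSum ((succs u).map fun pr => pre pr.1 pr.2))) :=
        dv_add_list hall
      exact h1.trans (IDeriv.plus (IDeriv.refl t) (norm u).2)

/-! ### Dominated matching and simulation -/

def Mrel (p' u : TmP A Empty) (c : A) : Prop :=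
  ∀ v p'', TraceTo p' v p'' →
    ∃ x t'', Step u c x ∧ TraceTo x v t'' ∧ T t'' ⊆ T p''

def DomSim (p R : TmP A Empty) : Prop :=
  ∀ v p'', TraceTo p v p'' → ∃ R'', TraceTo R v R'' ∧ T R'' ⊆ T p''

theorem exists_forall₂ {α β : Type*} {P : α → β → Prop} :
    ∀ (l : List α), (∀ a ∈ l, ∃ b, P a b) → ∃ m, List.Forall₂ P l m
  | [], _ => ⟨[], List.Forall₂.nil⟩
  | a :: l, h => by
      obtain ⟨b, hb⟩ := h a (by simp)
      obtain ⟨m, hm⟩ := exists_forall₂ l (fun a' ha' => h a' (List.mem_cons_of_mem _ ha'))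
      exact ⟨b :: m, List.Forall₂.cons hb hm⟩

theorem forall₂_mem_right {α β : Type*} {P : α → β → Prop} {l : List α} {m : List β}
    (h : List.Forall₂ P l m) {b : β} (hb : b ∈ m) : ∃ a ∈ l, P a b := by
  induction h with
  | nil => simp at hb
  | cons hp hrest ih =>
      rcases List.mem_cons.mp hb with rfl | hb
      · exact ⟨_, by simp, hp⟩
      · obtain ⟨a, ha, hpa⟩ := ih hb
        exact ⟨a, by simp [ha], hpa⟩

theorem forall₂_mem_left {α β : Type*} {P : α → β → Prop} {l : List α} {m : List β}
    (h : List.Forall₂ P l m) {a : α} (ha : a ∈ l) : ∃ b ∈ m, P a b := by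
  induction h with
  | nil => simp at ha
  | cons hp hrest ih =>
      rcases List.mem_cons.mp ha with rfl | ha
      · exact ⟨_, by simp, hp⟩
      · obtain ⟨b, hb, hpb⟩ := ih ha
        exact ⟨b, by simp [hb], hpb⟩

/-! ### The key construction -/

theorem key : ∀ (n : ℕ) (p' : TmP A Empty), size p' ≤ n →
    ∀ (u : TmP A Empty) (c : A), Mrel p' u c →
      ∃ R, Bld u c R ∧ T R ⊆ T p' ∧ DomSim p' R := by
  intro n
  induction n with
  | zero => intro p' hp'; exact absurd hp' (by have := size_pos p'; omega)
  | succ n ih =>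
      intro p' hp' u c hM
      obtain ⟨x0, t0'', hstep0, htr0, hsub0⟩ := hM [] p' (TraceTo.refl p')
      cases htr0
      have hrec : ∀ pr ∈ succs p',
          ∃ qr : A × TmP A Empty, pr.1 = qr.1 ∧ Bld (Dsum u c) qr.1 qr.2 ∧
            T qr.2 ⊆ T pr.2 ∧ DomSim pr.2 qr.2 := by
        intro pr hpr
        have hM' : Mrel pr.2 (Dsum u c) pr.1 := by
          intro v r'' htr
          obtain ⟨x, t'', hsx, htx, hs⟩ :=
            hM (pr.1 :: v) r'' (TraceTo.act (step_of_mem_succs hpr) htr)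
          rcases traceTo_cons_iff.mp htx with ⟨x', hx', htr'⟩
          exact ⟨x', t'', step_Dsum_iff.mpr ⟨x, hsx, hx'⟩, htr', hs⟩
        have hsize : size pr.2 ≤ n := by
          have := size_of_mem_succs hpr; omega
        obtain ⟨Rk, h1, h2, h3⟩ := ih pr.2 hsize (Dsum u c) pr.1 hM'
        exact ⟨(pr.1, Rk), rfl, h1, h2, h3⟩
      obtain ⟨m, hF⟩ := exists_forall₂ (succs p') hrec
      refine ⟨plus x0 (listSum (m.map fun qr => pre qr.1 qr.2)), ?_, ?_, ?_⟩
      · exact Bld.mk hstep0 (fun qr hqr => by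
          obtain ⟨pr, -, -, hb, -, -⟩ := forall₂_mem_right hF hqr
          exact hb)
      · intro w hw
        rcases mem_T_plus.mp hw with hw | hw
        · exact hsub0 hw
        · rcases mem_T_listSum_elim hw with rfl | ⟨v, hv, hwv⟩
          · exact nil_mem_T p'
          · obtain ⟨qr, hqr, rfl⟩ := List.mem_map.mp hv
            rcases mem_T_pre.mp hwv with rfl | ⟨v', rfl, hv'⟩
            · exact nil_mem_T p'
            · obtain ⟨pr, hpr, heq, -, hTsub, -⟩ := forall₂_mem_right hF hqr
              have hstep : Step p' pr.1 pr.2 := step_of_mem_succs hpr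
              have : pr.1 :: v' ∈ T p' := cons_mem_T hstep (hTsub hv')
              rwa [heq] at this
      · intro v p'' htr
        cases v with
        | nil =>
            have : p'' = p' := traceTo_nil_iff.mp htr
            subst this
            refine ⟨_, TraceTo.refl _, ?_⟩
            intro w hw
            rcases mem_T_plus.mp hw with hw | hw
            · exact hsub0 hw
            · rcases mem_T_listSum_elim hw with rfl | ⟨vv, hvv, hwv⟩
              · exact nil_mem_T p''
              · obtain ⟨qr, hqr, rfl⟩ := List.mem_map.mp hvv
                rcases mem_T_pre.mp hwv with rfl | ⟨v', rfl, hv'⟩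
                · exact nil_mem_T p''
                · obtain ⟨pr, hpr, heq, -, hTsub, -⟩ := forall₂_mem_right hF hqr
                  have hstep : Step p'' pr.1 pr.2 := step_of_mem_succs hpr
                  have : pr.1 :: v' ∈ T p'' := cons_mem_T hstep (hTsub hv')
                  rwa [heq] at this
        | cons d v' =>
            rcases traceTo_cons_iff.mp htr with ⟨r, hs, htr'⟩
            have hpr : (d, r) ∈ succs p' := mem_succs_of_step hs
            obtain ⟨qr, hqr, heq, -, -, hDSr⟩ := forall₂_mem_left hF hpr
            obtain ⟨R'', htrR, hsubR⟩ := hDSr v' p'' htr'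
            have hmem : pre qr.1 qr.2 ∈ m.map (fun qr => pre qr.1 qr.2) :=
              List.mem_map.mpr ⟨qr, hqr, rfl⟩
            have hstepR : Step (plus x0 (listSum (m.map fun qr => pre qr.1 qr.2))) d qr.2 := by
              rw [show d = qr.1 from heq]
              exact Step.plusR _ (step_listSum_of_mem hmem)
            exact ⟨R'', TraceTo.act hstepR htrR, hsubR⟩

/-! ### The absorption lemma -/

theorem sabs : ∀ (n : ℕ) (p' : TmP A Empty), size p' ≤ n →
    ∀ (q : TmP A Empty) (c : A), Mrel p' q c → Dv (plus q (pre c p')) q := by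
  intro n
  induction n with
  | zero => intro p' hp'; exact absurd hp' (by have := size_pos p'; omega)
  | succ n ih =>
      intro p' hp' q c hM
      obtain ⟨R, hBld, hTR, hDS⟩ := key (size p') p' le_rfl q c hM
      have hq : Abs q (pre c R) := bld_abs hBld
      have hL1 : Dv p' (plus p' R) := L1 (size R) R le_rfl p' hTR
      have hRp : Dv (plus R p') R := by
        have hsteps : ∀ v ∈ (succs p').map (fun pr => pre pr.1 pr.2), Dv (plus R v) R := by
          intro v hv
          obtain ⟨pr, hpr, rfl⟩ := List.mem_map.mp hv
          have hMr : Mrel pr.2 R pr.1 := by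
            intro w r'' htr
            obtain ⟨R'', htrR, hsub⟩ :=
              hDS (pr.1 :: w) r'' (TraceTo.act (step_of_mem_succs hpr) htr)
            rcases traceTo_cons_iff.mp htrR with ⟨x, hx, htr'⟩
            exact ⟨x, R'', hx, htr', hsub⟩
          have hsize : size pr.2 ≤ n := by
            have := size_of_mem_succs hpr; omega
          exact ih pr.2 hsize R pr.1 hMr
        have h1 : Dv (plus R p')
            (plus R (listSum ((succs p').map fun pr => pre pr.1 pr.2))) :=
          IDeriv.plus (IDeriv.refl R) (norm p').1
        exact h1.trans (dv_absorb_list hsteps)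
      have d1 : Dv (plus q (pre c p')) (plus q (pre c (plus p' R))) :=
        IDeriv.plus (IDeriv.refl q) (IDeriv.pre c hL1)
      have d2 : Dv (plus p' R) R := (pcomm p' R).1.trans hRp
      have d3 : Dv (plus q (pre c (plus p' R))) (plus q (pre c R)) :=
        IDeriv.plus (IDeriv.refl q) (IDeriv.pre c d2)
      exact (d1.trans d3).trans hq.2

theorem ifle_domSim {p q : TmP A Empty} (h : IFle p q) : DomSim p q := by
  intro v p' htr
  obtain ⟨q', htr', hq'⟩ := h v {s | s ∉ T p'} ⟨p', htr, fun s hs hmem => hmem hs⟩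
  exact ⟨q', htr', fun s hs => not_not.mp (hq' s hs)⟩

end TmP

/-- A1-4 + IF1 + IF2 is ground-complete for BCCSP modulo the
impossible futures preorder: `p ≲_IF q` implies `⊢ p ≼ q` for closed `p`, `q`. -/
theorem stmt9 {A : Type} [Nonempty A] (p q : TmP A Empty) (h : TmP.IFle p q) :
    TmP.IDeriv TmP.AXIF p q := by
  open TmP in
  have hDS : DomSim p q := ifle_domSim h
  have hTqp : T q ⊆ T p := by
    obtain ⟨q', htr, hsub⟩ := hDS [] p (TraceTo.refl p)
    cases htr
    exact hsub
  have h1 : TmP.Dv p (TmP.plus p q) := TmP.L1 (TmP.size q) q le_rfl p hTqp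
  have h2 : TmP.Dv (TmP.plus p q) q := by
    have hsteps : ∀ v ∈ (TmP.succs p).map (fun pr => TmP.pre pr.1 pr.2),
        TmP.Dv (TmP.plus q v) q := by
      intro v hv
      obtain ⟨pr, hpr, rfl⟩ := List.mem_map.mp hv
      have hMr : TmP.Mrel pr.2 q pr.1 := by
        intro w r'' htr
        obtain ⟨R'', htrR, hsub⟩ :=
          hDS (pr.1 :: w) r'' (TmP.TraceTo.act (TmP.step_of_mem_succs hpr) htr)
        rcases TmP.traceTo_cons_iff.mp htrR with ⟨x, hx, htr'⟩
        exact ⟨x, R'', hx, htr', hsub⟩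
      exact TmP.sabs (TmP.size pr.2) pr.2 le_rfl q pr.1 hMr
    have c1 : TmP.Dv (TmP.plus p q) (TmP.plus q p) := (TmP.pcomm p q).1
    have c2 : TmP.Dv (TmP.plus q p)
        (TmP.plus q (TmP.listSum ((TmP.succs p).map fun pr => TmP.pre pr.1 pr.2))) :=
      TmP.IDeriv.plus (TmP.IDeriv.refl q) (TmP.norm p).1
    exact (c1.trans c2).trans (TmP.dv_absorb_list hsteps)
  exact h1.trans h2
end

section
/- Let |A| > 1. If t ≲_WIF u (under all closed substitutions), then t and u have the same sets of weak traces, including weak traces ending in a variable: WT_V(t) = WT_V(u) and the weak traces of t and u ending with an action coincide. -/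
/-- BCCS terms over concrete actions `A` (with `none` playing the role of the
hidden action τ) and variables `V`. -/
inductive Tm (A V : Type) : Type
  | nil : Tm A V
  | var : V → Tm A V
  | plus : Tm A V → Tm A V → Tm A V
  | pre : Option A → Tm A V → Tm A V

namespace Tm

variable {A V : Type}

/-- The operational semantics of BCCS. -/
inductive Step : Tm A V → Option A → Tm A V → Prop
  | pre (α : Option A) (t : Tm A V) : Step (.pre α t) α t
  | plusL {t : Tm A V} {α : Option A} {t' : Tm A V} (u : Tm A V) :
      Step t α t' → Step (.plus t u) α t'
  | plusR (t : Tm A V) {u : Tm A V} {α : Option A} {u' : Tm A V} :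
      Step u α u' → Step (.plus t u) α u'

/-- `⇒` : the reflexive-transitive closure of τ-steps. -/
def WTau : Tm A V → Tm A V → Prop := Relation.ReflTransGen (fun t u => Step t none u)

/-- Strong (concrete) traces leading to a state. -/
inductive TraceTo : Tm A V → List A → Tm A V → Prop
  | refl (t : Tm A V) : TraceTo t [] t
  | act {t : Tm A V} {a : A} {t' : Tm A V} {w : List A} {u : Tm A V} :
      Step t (some a) t' → TraceTo t' w u → TraceTo t (a :: w) u

/-- Weak traces leading to a state (τ-steps are skipped). -/
inductive WTraceTo : Tm A V → List A → Tm A V → Prop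
  | refl (t : Tm A V) : WTraceTo t [] t
  | tau {t t' : Tm A V} {w : List A} {u : Tm A V} :
      Step t none t' → WTraceTo t' w u → WTraceTo t w u
  | act {t : Tm A V} {a : A} {t' : Tm A V} {w : List A} {u : Tm A V} :
      Step t (some a) t' → WTraceTo t' w u → WTraceTo t (a :: w) u

/-- The set of (strong) traces of a term. -/
def T (t : Tm A V) : Set (List A) := {w | ∃ t', TraceTo t w t'}

/-- The set of weak traces of a term. -/
def WT (t : Tm A V) : Set (List A) := {w | ∃ t', WTraceTo t w t'}

/-- `(w, B)` is an impossible future of `t`. -/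
def ImpFut (t : Tm A V) (w : List A) (B : Set (List A)) : Prop :=
  ∃ t', TraceTo t w t' ∧ ∀ s ∈ T t', s ∉ B

/-- `(w, B)` is a weak impossible future of `t`. -/
def WImpFut (t : Tm A V) (w : List A) (B : Set (List A)) : Prop :=
  ∃ t', WTraceTo t w t' ∧ ∀ s ∈ WT t', s ∉ B

/-- The (concrete) impossible futures preorder. -/
def IFle (p q : Tm A V) : Prop := ∀ w B, ImpFut p w B → ImpFut q w B

/-- (Concrete) impossible futures equivalence. -/
def IFeq (p q : Tm A V) : Prop := IFle p q ∧ IFle q p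

/-- The weak impossible futures preorder. -/
def WIFle (p q : Tm A V) : Prop :=
  (∀ w B, WImpFut p w B → WImpFut q w B) ∧ (WT p = WT q) ∧
  ((∃ p', Step p none p') → ∃ q', Step q none q')

/-- Weak impossible futures equivalence. -/
def WIFeq (p q : Tm A V) : Prop := WIFle p q ∧ WIFle q p

/-- The variables occurring in a term. -/
def vars : Tm A V → Set V
  | nil => ∅
  | var x => {x}
  | plus t u => vars t ∪ vars u
  | pre _ t => vars t

/-- A term is closed if it contains no variables. -/
def Closed (t : Tm A V) : Prop := vars t = ∅

/-- Substitution. -/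
def subst (σ : V → Tm A V) : Tm A V → Tm A V
  | nil => nil
  | var x => σ x
  | plus t u => plus (subst σ t) (subst σ u)
  | pre α t => pre α (subst σ t)

/-- A closed substitution. -/
def ClosedSub (σ : V → Tm A V) : Prop := ∀ x, Closed (σ x)

/-- A BCCSP term: one containing no occurrence of the τ prefix. -/
def NoTau : Tm A V → Prop
  | nil => True
  | var _ => True
  | plus t u => NoTau t ∧ NoTau u
  | pre none _ => False
  | pre (some _) t => NoTau t

/-- The variables occurring initially (outside all prefixes). -/
def initVars : Tm A V → Set V
  | nil => ∅
  | var x => {x}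
  | plus t u => initVars t ∪ initVars u
  | pre _ _ => ∅

/-- The variables having a non-initial occurrence (under some prefix). -/
def deepVars : Tm A V → Set V
  | nil => ∅
  | var _ => ∅
  | plus t u => deepVars t ∪ deepVars u
  | pre _ t => vars t

/-- A term is safe if no variable occurs both initially and non-initially. -/
def Safe (t : Tm A V) : Prop := initVars t ∩ deepVars t = ∅

/-- `init-τ` : rename all initial prefixes into τ. -/
def initTau : Tm A V → Tm A V
  | nil => nil
  | var x => var x
  | plus t u => plus (initTau t) (initTau u)
  | pre _ t => pre none t

/-- The weak depth of a term (τ-prefixes are not counted). -/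
def wdepth : Tm A V → ℕ
  | nil => 0
  | var _ => 0
  | plus t u => max (wdepth t) (wdepth u)
  | pre none t => wdepth t
  | pre (some _) t => wdepth t + 1

/-- `n`-fold prefixing with the action `a`. -/
def npre (a : A) : ℕ → Tm A V → Tm A V
  | 0, t => t
  | n + 1, t => pre (some a) (npre a n t)

/-- Finite sums of terms. -/
def listSum : List (Tm A V) → Tm A V
  | [] => nil
  | t :: l => plus t (listSum l)

/-- Weak traces ending in a variable: `(w, x) ∈ WTV t` iff `t` can weakly perform
`w` and reach a term in which `x` occurs initially. -/
def WTV (t : Tm A V) : Set (List A × V) :=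
  {wx | ∃ t', WTraceTo t wx.1 t' ∧ wx.2 ∈ initVars t'}

/-- The axioms A1-4 + WIF1 + WIF2 (as schemas, i.e. closed under instantiation). -/
inductive AX : Tm A V → Tm A V → Prop
  | A1 (t u : Tm A V) : AX (.plus t u) (.plus u t)
  | A2 (t u v : Tm A V) : AX (.plus (.plus t u) v) (.plus t (.plus u v))
  | A3 (t : Tm A V) : AX (.plus t t) t
  | A4 (t : Tm A V) : AX (.plus t .nil) t
  | WIF1 (α : Option A) (t u : Tm A V) :
      AX (.pre α (.plus (.pre none t) (.pre none u))) (.plus (.pre α t) (.pre α u))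
  | WIF2 (t u : Tm A V) :
      AX (.plus (.pre none t) u) (.plus (.pre none t) (.pre none (.plus t u)))

/-- Equational derivability from an axiomatization `E`. -/
inductive Deriv (E : Tm A V → Tm A V → Prop) : Tm A V → Tm A V → Prop
  | ax {t u : Tm A V} : E t u → Deriv E t u
  | inst {t u : Tm A V} (σ : V → Tm A V) : E t u → Deriv E (subst σ t) (subst σ u)
  | refl (t : Tm A V) : Deriv E t t
  | symm {t u : Tm A V} : Deriv E t u → Deriv E u t
  | trans {t u v : Tm A V} : Deriv E t u → Deriv E u v → Deriv E t v
  | pre (α : Option A) {t u : Tm A V} : Deriv E t u → Deriv E (.pre α t) (.pre α u)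
  | plus {t u t' u' : Tm A V} :
      Deriv E t t' → Deriv E u u' → Deriv E (.plus t u) (.plus t' u')

/-- Inequational derivability from an axiomatization `E` (no symmetry). -/
inductive IDeriv (E : Tm A V → Tm A V → Prop) : Tm A V → Tm A V → Prop
  | ax {t u : Tm A V} : E t u → IDeriv E t u
  | inst {t u : Tm A V} (σ : V → Tm A V) : E t u → IDeriv E (subst σ t) (subst σ u)
  | refl (t : Tm A V) : IDeriv E t t
  | trans {t u v : Tm A V} : IDeriv E t u → IDeriv E u v → IDeriv E t v
  | pre (α : Option A) {t u : Tm A V} : IDeriv E t u → IDeriv E (.pre α t) (.pre α u)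
  | plus {t u t' u' : Tm A V} :
      IDeriv E t t' → IDeriv E u u' → IDeriv E (.plus t u) (.plus t' u')

end Tm

/-!
Closing a term by `0` does not change its weak traces, so `WT t = WT u` is the instance of the
hypothesis at the substitution `x ↦ 0`. For `(w, x) ∈ WTV t`, substitute `aᴺb` for `x` and `aᴺ`
for every other variable, where `N` is the weak depth of `u`. Then `w aᴺ b` is a weak trace of
`ρ(u)`. It is too long to be a weak trace of `u`, so it splits as `w₁ v` with `(w₁, y) ∈ WTV u`
and `v` a weak trace of `ρ(y)`. As `|w₁| ≤ N`, the suffix `v` must contain the final `b`, which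
forces `y = x`, `v = aᴺb` and `w₁ = w`.
-/

theorem List.eq_of_append_concat_eq_append_of_prefix {α : Type*} {w w' v L : List α} {b : α}
    (hb : b ∉ L) (hw' : w'.length ≤ L.length) (heq : w ++ (L ++ [b]) = w' ++ v)
    (hv : v <+: L ++ [b]) : w = w' ∧ v = L ++ [b] := by
  rcases List.prefix_concat_iff.1 hv with rfl | hvL
  · exact ⟨List.append_cancel_right heq, rfl⟩
  · have hv0 : v ≠ [] := by
      rintro rfl
      have := congrArg length heq
      simp only [length_append, length_nil, length_singleton] at this
      omega
    have hlast : (w' ++ v).getLast? = some b := by rw [← heq, ← append_assoc, getLast?_concat]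
    rw [getLast?_append_of_ne_nil _ hv0] at hlast
    exact absurd (hvL.subset (mem_of_getLast? hlast)) hb

namespace Tm

variable {A V : Type}

theorem WTraceTo.append {t t' s : Tm A V} {w v : List A} (h₁ : WTraceTo t w t')
    (h₂ : WTraceTo t' v s) : WTraceTo t (w ++ v) s := by
  induction h₁ with
  | refl => exact h₂
  | tau hs _ ih => exact .tau hs (ih h₂)
  | act hs _ ih => exact .act hs (ih h₂)

section Subst

variable {σ : V → Tm A V}

theorem Step.subst {t t' : Tm A V} {α : Option A} (h : Step t α t') :
    Step (Tm.subst σ t) α (Tm.subst σ t') := by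
  induction h with
  | pre => exact .pre _ _
  | plusL _ _ ih => exact .plusL _ ih
  | plusR _ _ ih => exact .plusR _ ih

theorem Step.subst_of_mem_initVars {t s : Tm A V} {x : V} {α : Option A}
    (hx : x ∈ initVars t) (h : Step (σ x) α s) : Step (Tm.subst σ t) α s := by
  induction t with
  | nil | pre => simp [initVars] at hx
  | var y =>
    obtain rfl : x = y := hx
    exact h
  | plus t u iht ihu =>
    rcases hx with hx | hx
    · exact .plusL _ (iht hx)
    · exact .plusR _ (ihu hx)

theorem Step.of_subst {t s : Tm A V} {α : Option A} (h : Step (Tm.subst σ t) α s) :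
    (∃ t', Step t α t' ∧ s = Tm.subst σ t') ∨ ∃ x ∈ initVars t, Step (σ x) α s := by
  induction t with
  | nil => cases h
  | var y => exact .inr ⟨y, rfl, h⟩
  | plus t u iht ihu =>
    cases h with
    | plusL _ h =>
      rcases iht h with ⟨t', ht', rfl⟩ | ⟨x, hx, hs⟩
      · exact .inl ⟨t', .plusL _ ht', rfl⟩
      · exact .inr ⟨x, .inl hx, hs⟩
    | plusR _ h =>
      rcases ihu h with ⟨u', hu', rfl⟩ | ⟨x, hx, hs⟩
      · exact .inl ⟨u', .plusR _ hu', rfl⟩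
      · exact .inr ⟨x, .inr hx, hs⟩
  | pre =>
    cases h
    exact .inl ⟨_, .pre _ _, rfl⟩

theorem WTraceTo.subst {t t' : Tm A V} {w : List A} (h : WTraceTo t w t') :
    WTraceTo (Tm.subst σ t) w (Tm.subst σ t') := by
  induction h with
  | refl => exact .refl _
  | tau hs _ ih => exact .tau hs.subst ih
  | act hs _ ih => exact .act hs.subst ih

theorem append_mem_WT_subst {t : Tm A V} {w v : List A} {x : V} (hwx : (w, x) ∈ WTV t)
    (hv : v ∈ WT (σ x)) : w ++ v ∈ WT (subst σ t) := by
  obtain ⟨t', ht', hx⟩ := hwx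
  obtain ⟨s, hs⟩ := hv
  have hv' : ∃ s', WTraceTo (subst σ t') v s' := by
    cases hs with
    | refl => exact ⟨_, .refl _⟩
    | tau hs rest => exact ⟨_, .tau (hs.subst_of_mem_initVars hx) rest⟩
    | act hs rest => exact ⟨_, .act (hs.subst_of_mem_initVars hx) rest⟩
  obtain ⟨s', hs'⟩ := hv'
  exact ⟨s', ht'.subst.append hs'⟩

theorem WTraceTo.of_subst {t s : Tm A V} {w : List A} (h : WTraceTo (Tm.subst σ t) w s) :
    w ∈ WT t ∨ ∃ w₁ v x, w = w₁ ++ v ∧ (w₁, x) ∈ WTV t ∧ v ∈ WT (σ x) := by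
  generalize hp : Tm.subst σ t = p at h
  induction h generalizing t with
  | refl => exact .inl ⟨t, .refl t⟩
  | @tau p p' w s hs hrest ih =>
    subst hp
    rcases hs.of_subst with ⟨t', ht', rfl⟩ | ⟨x, hx, hσ⟩
    · rcases ih rfl with ⟨s', hs'⟩ | ⟨w₁, v, y, rfl, ⟨t'', ht'', hy⟩, hv⟩
      · exact .inl ⟨s', .tau ht' hs'⟩
      · exact .inr ⟨w₁, v, y, rfl, ⟨t'', .tau ht' ht'', hy⟩, hv⟩
    · exact .inr ⟨[], w, x, rfl, ⟨t, .refl t, hx⟩, ⟨s, .tau hσ hrest⟩⟩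
  | @act p a p' w s hs hrest ih =>
    subst hp
    rcases hs.of_subst with ⟨t', ht', rfl⟩ | ⟨x, hx, hσ⟩
    · rcases ih rfl with ⟨s', hs'⟩ | ⟨w₁, v, y, rfl, ⟨t'', ht'', hy⟩, hv⟩
      · exact .inl ⟨s', .act ht' hs'⟩
      · exact .inr ⟨a :: w₁, v, y, rfl, ⟨t'', .act ht' ht'', hy⟩, hv⟩
    · exact .inr ⟨[], a :: w, x, rfl, ⟨t, .refl t, hx⟩, ⟨s, .act hσ hrest⟩⟩

end Subst

theorem WTraceTo.eq_nil_of_nil {w : List A} {s : Tm A V} (h : WTraceTo nil w s) : w = [] := by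
  cases h with
  | refl => rfl
  | tau hs => cases hs
  | act hs => cases hs

theorem WT_subst_nil (t : Tm A V) : WT (subst (fun _ => nil) t) = WT t := by
  ext w
  constructor
  · rintro ⟨s, hs⟩
    rcases hs.of_subst with hw | ⟨w₁, v, x, rfl, ⟨t', ht', -⟩, ⟨s', hs'⟩⟩
    · exact hw
    · rw [hs'.eq_nil_of_nil, List.append_nil]
      exact ⟨t', ht'⟩
  · rintro ⟨s, hs⟩
    exact ⟨_, hs.subst⟩

theorem Step.wdepth_le {t t' : Tm A V} {α : Option A} (h : Step t α t') :
    wdepth t' + (if α.isSome then 1 else 0) ≤ wdepth t := by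
  induction h with
  | pre α => cases α <;> simp [wdepth]
  | plusL _ _ ih => exact ih.trans (le_max_left _ _)
  | plusR _ _ ih => exact ih.trans (le_max_right _ _)

theorem WTraceTo.length_le_wdepth {t s : Tm A V} {w : List A} (h : WTraceTo t w s) :
    w.length ≤ wdepth t := by
  induction h with
  | refl => exact Nat.zero_le _
  | tau hs _ ih => simpa using ih.trans hs.wdepth_le
  | act hs _ ih => simpa using Nat.add_le_add_right ih 1 |>.trans hs.wdepth_le

def ofList : List A → Tm A V
  | [] => nil
  | a :: l => pre (some a) (ofList l)

theorem closed_ofList (L : List A) : Closed (ofList L : Tm A V) := by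
  induction L with
  | nil => rfl
  | cons _ _ ih => exact ih

theorem mem_WT_ofList_self (L : List A) : L ∈ WT (ofList L : Tm A V) := by
  induction L with
  | nil => exact ⟨_, .refl _⟩
  | cons a l ih =>
    obtain ⟨s, hs⟩ := ih
    exact ⟨s, .act (.pre _ _) hs⟩

theorem prefix_of_mem_WT_ofList {L w : List A} (h : w ∈ WT (ofList L : Tm A V)) : w <+: L := by
  obtain ⟨s, hs⟩ := h
  induction L generalizing w with
  | nil => rw [hs.eq_nil_of_nil]
  | cons a l ih =>
    cases hs with
    | refl => exact List.nil_prefix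
    | tau hs => cases hs
    | act hs hrest =>
      cases hs
      exact List.cons_prefix_cons.2 ⟨rfl, ih hrest⟩

theorem WTV_subset_of_WT_subst_eq {a b : A} (hab : a ≠ b) {t u : Tm A V}
    (h : ∀ ρ : V → Tm A V, ClosedSub ρ → WT (subst ρ t) = WT (subst ρ u)) :
    WTV t ⊆ WTV u := by
  classical
  rintro ⟨w, x⟩ hwx
  set N := wdepth u
  let ρ : V → Tm A V := fun y =>
    if y = x then ofList (List.replicate N a ++ [b]) else ofList (List.replicate N a)
  have hρ : ClosedSub ρ := fun y => by
    dsimp only [ρ]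
    split <;> exact closed_ofList _
  have hwab : w ++ (List.replicate N a ++ [b]) ∈ WT (subst ρ u) := by
    rw [← h ρ hρ]
    exact append_mem_WT_subst hwx (by simpa [ρ] using mem_WT_ofList_self _)
  have hb : b ∉ List.replicate N a := fun hb => hab (List.eq_of_mem_replicate hb).symm
  obtain ⟨s, hs⟩ := hwab
  rcases hs.of_subst with ⟨s', hs'⟩ | ⟨w₁, v, y, heq, ⟨u', hu', hy⟩, hv⟩
  · have := hs'.length_le_wdepth
    simp only [List.length_append, List.length_replicate, List.length_singleton] at this
    omega
  have hw₁ : w₁.length ≤ (List.replicate N a).length := by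
    simpa using hu'.length_le_wdepth
  by_cases hyx : y = x
  · subst hyx
    have hv : v <+: List.replicate N a ++ [b] := prefix_of_mem_WT_ofList (by simpa [ρ] using hv)
    obtain ⟨rfl, -⟩ := List.eq_of_append_concat_eq_append_of_prefix hb hw₁ heq hv
    exact ⟨u', hu', hy⟩
  · have hv : v <+: List.replicate N a := prefix_of_mem_WT_ofList (by simpa [ρ, hyx] using hv)
    obtain ⟨-, rfl⟩ := List.eq_of_append_concat_eq_append_of_prefix hb hw₁ heq
      (hv.trans (List.prefix_append _ _))
    simpa using hv.length_le

end Tm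

theorem stmt16_general {A V : Type} (hA : ∃ a b : A, a ≠ b)
    (t u : Tm A V)
    (h : ∀ ρ : V → Tm A V, Tm.ClosedSub ρ → Tm.WIFle (Tm.subst ρ t) (Tm.subst ρ u)) :
    Tm.WT t = Tm.WT u ∧ Tm.WTV t = Tm.WTV u := by
  obtain ⟨a, b, hab⟩ := hA
  have hWT : ∀ ρ : V → Tm A V, Tm.ClosedSub ρ → Tm.WT (Tm.subst ρ t) = Tm.WT (Tm.subst ρ u) :=
    fun ρ hρ => (h ρ hρ).2.1
  refine ⟨?_, (Tm.WTV_subset_of_WT_subst_eq hab hWT).antisymm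
    (Tm.WTV_subset_of_WT_subst_eq hab fun ρ hρ => (hWT ρ hρ).symm)⟩
  rw [← Tm.WT_subst_nil t, ← Tm.WT_subst_nil u]
  exact hWT _ fun _ => rfl

/-- for `|A| > 1`, if `t ≲_WIF u` under all closed substitutions,
then `t` and `u` have the same weak traces and the same weak traces ending in a
variable. -/
theorem stmt16 {A V : Type} [Countable V] (hA : ∃ a b : A, a ≠ b)
    (t u : Tm A V)
    (h : ∀ ρ : V → Tm A V, Tm.ClosedSub ρ → Tm.WIFle (Tm.subst ρ t) (Tm.subst ρ u)) :
    Tm.WT t = Tm.WT u ∧ Tm.WTV t = Tm.WTV u :=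
  stmt16_general hA t u h
end
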